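/- For a domain X, every Scott-open filter on FX (the domain of Scott-open filters of X) is an evaluation: if 𝒜 is a Scott-open filter of the poset FX, then there exists x ∈ X such that 𝒜 = {α ∈ FX : x ∈ α}; moreover x can be taken to be sup of the ideal ψ_𝒜 = {z ∈ X : ∃ α ∈ 𝒜, α ⊆ ↑z}. -/

import Mathlib

def IsDcpoP (X : Type*) [Preorder X] : Prop :=
  ∀ D : Set X, D.Nonempty → DirectedOn (· ≤ ·) D → ∃ s, IsLUB D s

def wayBelow {X : Type*} [Preorder X] (y x : X) : Prop :=
  ∀ D : Set X, D.Nonempty → DirectedOn (· ≤ ·) D →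
    ∀ s, IsLUB D s → x ≤ s → ∃ d ∈ D, y ≤ d

/-- A domain: a continuous dcpo. -/
def IsContDomain (X : Type*) [Preorder X] : Prop :=
  IsDcpoP X ∧
  ∀ x : X, ({y | wayBelow y x}).Nonempty ∧
    DirectedOn (· ≤ ·) {y | wayBelow y x} ∧ IsLUB {y | wayBelow y x} x

def IsScottOpenFilter {X : Type*} [Preorder X] (α : Set X) : Prop :=
  α.Nonempty ∧
  (∀ ⦃a b : X⦄, a ≤ b → a ∈ α → b ∈ α) ∧
  (∀ a ∈ α, ∀ b ∈ α, ∃ c ∈ α, c ≤ a ∧ c ≤ b) ∧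
  (∀ D : Set X, D.Nonempty → DirectedOn (· ≤ ·) D →
    ∀ s, IsLUB D s → s ∈ α → ∃ d ∈ D, d ∈ α)

/-- The poset of Scott-open filters of `X`, ordered by inclusion. -/
abbrev SOF (X : Type*) [Preorder X] := {α : Set X // IsScottOpenFilter α}

/-!
Every `α ∈ 𝒜` is the directed union of the Scott-open filters that lie inside `↑z` for some
`z ∈ α` (in a domain, `x ∈ α` has some `z ≪ x` in `α`, and an interpolating sequence
`x ≫ c₁ ≫ c₂ ≫ ⋯ ≫ z` generates such a filter containing `x`). As `𝒜` is Scott-open, one of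
them already lies in `𝒜`, so every `α ∈ 𝒜` contains an element of `ψ_𝒜`. This makes `ψ_𝒜`
directed; if `x = sup ψ_𝒜` then `α ∈ 𝒜` gives `x ∈ α`, and conversely `x ∈ α` gives some
`z ∈ ψ_𝒜 ∩ α` by Scott-openness of `α`, whence `α ⊇ ↑z ⊇ β` for some `β ∈ 𝒜`.
-/

namespace IsScottOpenFilter

variable {X : Type*} [Preorder X] {α : Set X}

lemma mem_of_le (h : IsScottOpenFilter α) {a b : X} (hab : a ≤ b) (ha : a ∈ α) : b ∈ α :=
  h.2.1 hab ha

lemma exists_le_le (h : IsScottOpenFilter α) {a b : X} (ha : a ∈ α) (hb : b ∈ α) :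
    ∃ c ∈ α, c ≤ a ∧ c ≤ b :=
  h.2.2.1 a ha b hb

lemma exists_mem_of_isLUB (h : IsScottOpenFilter α) {D : Set X} (hD : D.Nonempty)
    (hdir : DirectedOn (· ≤ ·) D) {s : X} (hs : IsLUB D s) (hsα : s ∈ α) : ∃ d ∈ D, d ∈ α :=
  h.2.2.2 D hD hdir s hs hsα

lemma union_of_subset_Ici {F G : Set X} (hF : IsScottOpenFilter F) (hG : IsScottOpenFilter G)
    {g : X} (hg : g ∈ G) (hFg : F ⊆ Set.Ici g) : IsScottOpenFilter (F ∪ G) := by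
  refine ⟨⟨g, .inr hg⟩, ?_, ?_, ?_⟩
  · rintro a b hab (ha | ha)
    exacts [.inl (hF.mem_of_le hab ha), .inr (hG.mem_of_le hab ha)]
  · rintro a (ha | ha) b (hb | hb)
    · obtain ⟨c, hc, hca, hcb⟩ := hF.exists_le_le ha hb
      exact ⟨c, .inl hc, hca, hcb⟩
    · obtain ⟨c, hc, hcg, hcb⟩ := hG.exists_le_le hg hb
      exact ⟨c, .inr hc, hcg.trans (hFg ha), hcb⟩
    · obtain ⟨c, hc, hca, hcg⟩ := hG.exists_le_le ha hg
      exact ⟨c, .inr hc, hca, hcg.trans (hFg hb)⟩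
    · obtain ⟨c, hc, hca, hcb⟩ := hG.exists_le_le ha hb
      exact ⟨c, .inr hc, hca, hcb⟩
  · rintro D hD hdir s hs (hsF | hsG)
    · exact (hF.exists_mem_of_isLUB hD hdir hs hsF).imp fun _ ⟨hd, hdF⟩ => ⟨hd, .inl hdF⟩
    · exact (hG.exists_mem_of_isLUB hD hdir hs hsG).imp fun _ ⟨hd, hdG⟩ => ⟨hd, .inr hdG⟩

end IsScottOpenFilter

section WayBelow

variable {X : Type*} [Preorder X]

lemma wayBelow.le {y x : X} (h : wayBelow y x) : y ≤ x := by
  obtain ⟨d, rfl, hyd⟩ := h {x} (Set.singleton_nonempty x) (directedOn_singleton x) x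
    isLUB_singleton le_rfl
  exact hyd

lemma wayBelow.trans_le {a b c : X} (h : wayBelow a b) (hbc : b ≤ c) : wayBelow a c :=
  fun D hD hdir s hs hcs => h D hD hdir s hs (hbc.trans hcs)

lemma wayBelow_of_le_of_wayBelow {a b c : X} (hab : a ≤ b) (h : wayBelow b c) :
    wayBelow a c :=
  fun D hD hdir s hs hcs => (h D hD hdir s hs hcs).imp fun _ hd => ⟨hd.1, hab.trans hd.2⟩

/-- Interpolation: the elements way below something way below `x` form a directed set with
supremum `x`, so `z ≪ x` already reaches one of them. -/
lemma exists_wayBelow_wayBelow (hX : IsContDomain X) {z x : X} (h : wayBelow z x) :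
    ∃ w, wayBelow z w ∧ wayBelow w x := by
  set D : Set X := {u | ∃ w, wayBelow u w ∧ wayBelow w x}
  have hD : D.Nonempty := by
    obtain ⟨w, hw⟩ := (hX.2 x).1
    obtain ⟨u, hu⟩ := (hX.2 w).1
    exact ⟨u, w, hu, hw⟩
  have hdir : DirectedOn (· ≤ ·) D := by
    rintro u₁ ⟨w₁, hu₁, hw₁⟩ u₂ ⟨w₂, hu₂, hw₂⟩
    obtain ⟨w, hw, hw₁w, hw₂w⟩ := (hX.2 x).2.1 w₁ hw₁ w₂ hw₂
    obtain ⟨u, hu, hu₁u, hu₂u⟩ := (hX.2 w).2.1 u₁ (hu₁.trans_le hw₁w) u₂ (hu₂.trans_le hw₂w)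
    exact ⟨u, ⟨w, hu, hw⟩, hu₁u, hu₂u⟩
  have hlub : IsLUB D x := by
    refine ⟨fun u ⟨w, hu, hw⟩ => hu.le.trans hw.le, fun b hb => (hX.2 x).2.2.2 ?_⟩
    exact fun w hw => (hX.2 w).2.2.2 fun u hu => hb ⟨w, hu, hw⟩
  obtain ⟨d, ⟨w, hdw, hwx⟩, hzd⟩ := h D hD hdir x hlub le_rfl
  exact ⟨w, wayBelow_of_le_of_wayBelow hzd hdw, hwx⟩

lemma IsScottOpenFilter.exists_wayBelow_mem (hX : IsContDomain X) {α : Set X}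
    (hα : IsScottOpenFilter α) {x : X} (hx : x ∈ α) : ∃ z ∈ α, wayBelow z x := by
  obtain ⟨z, hzx, hz⟩ := hα.exists_mem_of_isLUB (hX.2 x).1 (hX.2 x).2.1 (hX.2 x).2.2 hx
  exact ⟨z, hz, hzx⟩

lemma exists_isScottOpenFilter_mem_subset_Ici (hX : IsContDomain X) {z x : X}
    (h : wayBelow z x) : ∃ F : Set X, IsScottOpenFilter F ∧ x ∈ F ∧ F ⊆ Set.Ici z := by
  have interpolate (w : {w : X // wayBelow z w}) :
      ∃ w' : {w : X // wayBelow z w}, wayBelow w'.1 w.1 :=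
    let ⟨w', hzw', hw'w⟩ := exists_wayBelow_wayBelow hX w.2
    ⟨⟨w', hzw'⟩, hw'w⟩
  choose next hnext using interpolate
  let c : ℕ → {w : X // wayBelow z w} := fun n => Nat.rec ⟨x, h⟩ (fun _ w => next w) n
  have hc : ∀ n, wayBelow (c (n + 1)).1 (c n).1 := fun n => hnext (c n)
  have hanti : Antitone fun n => (c n).1 := antitone_nat_of_succ_le fun n => (hc n).le
  refine ⟨{y | ∃ n, (c (n + 1)).1 ≤ y}, ⟨⟨x, 0, (hc 0).le⟩, ?_, ?_, ?_⟩, ⟨0, (hc 0).le⟩, ?_⟩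
  · rintro a b hab ⟨n, hn⟩
    exact ⟨n, hn.trans hab⟩
  · rintro a ⟨m, hm⟩ b ⟨n, hn⟩
    refine ⟨(c (max m n + 1)).1, ⟨max m n, le_rfl⟩, ?_, ?_⟩
    · exact (hanti (by omega : m + 1 ≤ max m n + 1)).trans hm
    · exact (hanti (by omega : n + 1 ≤ max m n + 1)).trans hn
  · rintro D hD hdir s hs ⟨n, hn⟩
    obtain ⟨d, hd, hcd⟩ := (hc (n + 1)).trans_le hn D hD hdir s hs le_rfl
    exact ⟨d, hd, n + 1, hcd⟩
  · rintro y ⟨n, hn⟩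
    exact (c (n + 1)).2.le.trans hn

end WayBelow

section FilterSpace

variable {X : Type*} [Preorder X]

def lowerBoundedFilters (α : Set X) : Set (SOF X) :=
  {F | ∃ z ∈ α, F.1 ⊆ Set.Ici z}

lemma exists_mem_lowerBoundedFilters (hX : IsContDomain X) {α : Set X}
    (hα : IsScottOpenFilter α) {x : X} (hx : x ∈ α) : ∃ F ∈ lowerBoundedFilters α, x ∈ F.1 := by
  obtain ⟨z, hz, hzx⟩ := hα.exists_wayBelow_mem hX hx
  obtain ⟨F, hF, hxF, hFz⟩ := exists_isScottOpenFilter_mem_subset_Ici hX hzx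
  exact ⟨⟨F, hF⟩, ⟨z, hz, hFz⟩, hxF⟩

/-- `F₁ ∪ F₂ ∪ G` is an upper bound, where `z ∈ G ⊆ ↑z'` for a common lower bound `z ∈ α` of
the bounds of `F₁`, `F₂` and some `z' ∈ α` with `z' ≪ z`. -/
lemma directedOn_lowerBoundedFilters (hX : IsContDomain X) {α : Set X}
    (hα : IsScottOpenFilter α) : DirectedOn (· ≤ ·) (lowerBoundedFilters α) := by
  rintro ⟨F₁, hF₁⟩ ⟨z₁, hz₁, hF₁z₁⟩ ⟨F₂, hF₂⟩ ⟨z₂, hz₂, hF₂z₂⟩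
  obtain ⟨z, hz, hzz₁, hzz₂⟩ := hα.exists_le_le hz₁ hz₂
  obtain ⟨z', hz', hz'z⟩ := hα.exists_wayBelow_mem hX hz
  obtain ⟨G, hG, hzG, hGz'⟩ := exists_isScottOpenFilter_mem_subset_Ici hX hz'z
  have hF₁z : F₁ ⊆ Set.Ici z := fun y hy => hzz₁.trans (hF₁z₁ hy)
  have hF₂z : F₂ ⊆ Set.Ici z := fun y hy => hzz₂.trans (hF₂z₂ hy)
  have hF₁G : IsScottOpenFilter (F₁ ∪ G) := hF₁.union_of_subset_Ici hG hzG hF₁z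
  have hU : IsScottOpenFilter (F₂ ∪ (F₁ ∪ G)) :=
    hF₂.union_of_subset_Ici hF₁G (.inr hzG) hF₂z
  refine ⟨⟨_, hU⟩, ⟨z', hz', ?_⟩, fun y hy => .inr (.inl hy), fun y hy => .inl hy⟩
  rintro y (hy | hy | hy)
  exacts [hz'z.le.trans (hF₂z hy), hz'z.le.trans (hF₁z hy), hGz' hy]

lemma isLUB_lowerBoundedFilters (hX : IsContDomain X) {α : Set X}
    (hα : IsScottOpenFilter α) : IsLUB (lowerBoundedFilters α) ⟨α, hα⟩ := by
  refine ⟨fun F ⟨z, hz, hFz⟩ y hy => hα.mem_of_le (hFz hy) hz, fun γ hγ x hx => ?_⟩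
  obtain ⟨F, hF, hxF⟩ := exists_mem_lowerBoundedFilters hX hα hx
  exact hγ hF hxF

def evalIdeal (𝒜 : Set (SOF X)) : Set X :=
  {z | ∃ α ∈ 𝒜, α.1 ⊆ Set.Ici z}

lemma isLowerSet_evalIdeal (𝒜 : Set (SOF X)) : IsLowerSet (evalIdeal 𝒜) :=
  fun _ _ hab ⟨α, hα, hαb⟩ => ⟨α, hα, fun _ hy => hab.trans (hαb hy)⟩

lemma exists_mem_evalIdeal_of_mem (hX : IsContDomain X) {𝒜 : Set (SOF X)}
    (h𝒜 : IsScottOpenFilter 𝒜) {α : SOF X} (hα : α ∈ 𝒜) : ∃ z ∈ α.1, z ∈ evalIdeal 𝒜 := by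
  obtain ⟨x, hx⟩ := α.2.1
  obtain ⟨F₀, hF₀, -⟩ := exists_mem_lowerBoundedFilters hX α.2 hx
  obtain ⟨F, ⟨z, hz, hFz⟩, hF⟩ := h𝒜.exists_mem_of_isLUB ⟨F₀, hF₀⟩
    (directedOn_lowerBoundedFilters hX α.2) (isLUB_lowerBoundedFilters hX α.2) hα
  exact ⟨z, hz, F, hF, hFz⟩

lemma evalIdeal_nonempty (hX : IsContDomain X) {𝒜 : Set (SOF X)}
    (h𝒜 : IsScottOpenFilter 𝒜) : (evalIdeal 𝒜).Nonempty :=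
  let ⟨_, hα⟩ := h𝒜.1
  let ⟨z, _, hz⟩ := exists_mem_evalIdeal_of_mem hX h𝒜 hα
  ⟨z, hz⟩

lemma directedOn_evalIdeal (hX : IsContDomain X) {𝒜 : Set (SOF X)}
    (h𝒜 : IsScottOpenFilter 𝒜) : DirectedOn (· ≤ ·) (evalIdeal 𝒜) := by
  rintro z₁ ⟨α₁, hα₁, hα₁z₁⟩ z₂ ⟨α₂, hα₂, hα₂z₂⟩
  obtain ⟨β, hβ, hβα₁, hβα₂⟩ := h𝒜.exists_le_le hα₁ hα₂
  obtain ⟨z, hzβ, hz⟩ := exists_mem_evalIdeal_of_mem hX h𝒜 hβ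
  exact ⟨z, hz, hα₁z₁ (hβα₁ hzβ), hα₂z₂ (hβα₂ hzβ)⟩

lemma eq_setOf_mem_of_isLUB_evalIdeal (hX : IsContDomain X) {𝒜 : Set (SOF X)}
    (h𝒜 : IsScottOpenFilter 𝒜) {x : X} (hx : IsLUB (evalIdeal 𝒜) x) :
    𝒜 = {α : SOF X | x ∈ α.1} := by
  ext α
  constructor
  · intro hα
    obtain ⟨z, hzα, hz⟩ := exists_mem_evalIdeal_of_mem hX h𝒜 hα
    exact α.2.mem_of_le (hx.1 hz) hzα
  · intro hxα
    obtain ⟨z, ⟨β, hβ, hβz⟩, hzα⟩ := α.2.exists_mem_of_isLUB (evalIdeal_nonempty hX h𝒜)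
      (directedOn_evalIdeal hX h𝒜) hx hxα
    exact h𝒜.mem_of_le (fun y hy => α.2.mem_of_le (hβz hy) hzα) hβ

end FilterSpace

/-- For a domain `X`, every Scott-open filter `𝒜` on `FX` is an evaluation:
`𝒜 = {α ∈ FX | x ∈ α}` where `x` is the supremum of the ideal
`ψ_𝒜 = {z | ∃ α ∈ 𝒜, α ⊆ ↑z}`. -/
theorem stmt_17 {X : Type*} [PartialOrder X] (hX : IsContDomain X)
    (𝒜 : Set (SOF X)) (h𝒜 : IsScottOpenFilter 𝒜) :
    ∃ x : X,
      ({z : X | ∃ α ∈ 𝒜, α.1 ⊆ {y | z ≤ y}}).Nonempty ∧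
      DirectedOn (· ≤ ·) {z : X | ∃ α ∈ 𝒜, α.1 ⊆ {y | z ≤ y}} ∧
      (∀ ⦃a b : X⦄, a ≤ b → (∃ α ∈ 𝒜, α.1 ⊆ {y | b ≤ y}) →
        ∃ α ∈ 𝒜, α.1 ⊆ {y | a ≤ y}) ∧
      IsLUB {z : X | ∃ α ∈ 𝒜, α.1 ⊆ {y | z ≤ y}} x ∧
      𝒜 = {α : SOF X | x ∈ α.1} := by
  have hne := evalIdeal_nonempty hX h𝒜
  have hdir := directedOn_evalIdeal hX h𝒜
  obtain ⟨x, hx⟩ := hX.1 _ hne hdir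
  exact ⟨x, hne, hdir, fun _ _ hab => isLowerSet_evalIdeal 𝒜 hab, hx, eq_setOf_mem_of_isLUB_evalIdeal hX h𝒜 hx⟩
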